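/- Under the conditional independence assumption Z ⟂ R | (Y, A), the propensity score satisfies f(R=1 | a, y) = f(R=1 | a, y, z) = f(R=1 | a, y₁) / ( f(R=1 | a, y₁) + OR(a,y) · f(R=0 | a, y₁) ) for all values a, y, z with positive joint probability. -/

import Mathlib

open Finset

variable {A Y Z : Type} [Fintype A] [Fintype Y] [Fintype Z]

/-- Marginal mass `f(a, y)` of the joint mass function `f` on `(A, Y, Z, R)`,
with `R` encoded by `Bool` (`true` meaning `R = 1`). -/
noncomputable def mAY (f : A → Y → Z → Bool → ℝ) (a : A) (y : Y) : ℝ :=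
  ∑ z, ∑ r, f a y z r

/-- Marginal mass `f(a, y, z)`. -/
noncomputable def mAYZ (f : A → Y → Z → Bool → ℝ) (a : A) (y : Y) (z : Z) : ℝ :=
  ∑ r, f a y z r

/-- Marginal mass `f(a, y, r)`. -/
noncomputable def mAYR (f : A → Y → Z → Bool → ℝ) (a : A) (y : Y) (r : Bool) : ℝ :=
  ∑ z, f a y z r

/-- Marginal mass `f(a)`. -/
noncomputable def mA (f : A → Y → Z → Bool → ℝ) (a : A) : ℝ :=
  ∑ y, ∑ z, ∑ r, f a y z r

/-- Marginal mass `f(a, r)`. -/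
noncomputable def mAR (f : A → Y → Z → Bool → ℝ) (a : A) (r : Bool) : ℝ :=
  ∑ y, ∑ z, f a y z r

/-- Marginal mass `f(a, z)`. -/
noncomputable def mAZ (f : A → Y → Z → Bool → ℝ) (a : A) (z : Z) : ℝ :=
  ∑ y, ∑ r, f a y z r

/-- Marginal mass `f(a, z, r)`. -/
noncomputable def mAZR (f : A → Y → Z → Bool → ℝ) (a : A) (z : Z) (r : Bool) : ℝ :=
  ∑ y, f a y z r

/-- The shadow-variable assumption (a): the conditional independence `Z ⟂ R | (Y, A)`,
expressed via joint masses as `f(a,y,z,r) · f(a,y) = f(a,y,z) · f(a,y,r)`,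
i.e. `f(z, r | y, a) = f(z | y, a) · f(r | y, a)`. -/
def CondIndepZR (f : A → Y → Z → Bool → ℝ) : Prop :=
  ∀ (a : A) (y : Y) (z : Z) (r : Bool),
    f a y z r * mAY f a y = mAYZ f a y z * mAYR f a y r

/-- The odds-ratio function
`OR(a,y) = [f(R=0 | a, y) · f(R=1 | a, y₁)] / [f(R=1 | a, y) · f(R=0 | a, y₁)]`,
with reference value `y₁`. -/
noncomputable def OddsRatio (f : A → Y → Z → Bool → ℝ) (y₁ : Y) (a : A) (y : Y) : ℝ :=
  ((mAYR f a y false / mAY f a y) * (mAYR f a y₁ true / mAY f a y₁)) /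
    ((mAYR f a y true / mAY f a y) * (mAYR f a y₁ false / mAY f a y₁))

/-!
Divided by `f(a, y) f(a, y, z)`, the conditional-independence identity reads
`f(r | a, y, z) = f(r | a, y)`.
Writing `p = f(R=1 | a, y)` and `p₁ = f(R=1 | a, y₁)`, we have `f(R=0 | a, y) = 1 - p`, so
`OR(a, y) = (1 - p) p₁ / (p (1 - p₁))` and the odds-ratio formula is the identity
`p₁ / (p₁ + OR(a, y) (1 - p₁)) = p₁ / (p₁ / p) = p`.
-/

section Marginals

omit [Fintype A] [Fintype Y]

variable (f : A → Y → Z → Bool → ℝ) (a : A) (y : Y)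

theorem mAY_eq_mAYR_add_mAYR : mAY f a y = mAYR f a y true + mAYR f a y false := by
  simp only [mAY, mAYR, Fintype.sum_bool, Finset.sum_add_distrib]

theorem mAYR_false_div_mAY (h : mAY f a y ≠ 0) :
    mAYR f a y false / mAY f a y = 1 - mAYR f a y true / mAY f a y := by
  rw [eq_sub_iff_add_eq, ← add_div, add_comm, ← mAY_eq_mAYR_add_mAYR, div_self h]

variable {f a y}

theorem mAYR_pos [Nonempty Z] {r : Bool} (hpos : ∀ z, 0 < f a y z r) : 0 < mAYR f a y r :=
  Finset.sum_pos (fun z _ => hpos z) Finset.univ_nonempty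

omit [Fintype Z] in
theorem mAYZ_pos {z : Z} (hpos : ∀ r, 0 < f a y z r) : 0 < mAYZ f a y z :=
  Finset.sum_pos (fun r _ => hpos r) Finset.univ_nonempty

theorem mAY_pos [Nonempty Z] (hpos : ∀ z r, 0 < f a y z r) : 0 < mAY f a y := by
  rw [mAY_eq_mAYR_add_mAYR]
  exact add_pos (mAYR_pos (hpos · true)) (mAYR_pos (hpos · false))

end Marginals

omit [Fintype A] [Fintype Y] in
theorem mAYR_div_mAY_eq_of_condIndep {f : A → Y → Z → Bool → ℝ} (hci : CondIndepZR f)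
    {a : A} {y : Y} {z : Z} (r : Bool) (hy : mAY f a y ≠ 0) (hz : mAYZ f a y z ≠ 0) :
    mAYR f a y r / mAY f a y = f a y z r / mAYZ f a y z := by
  rw [div_eq_div_iff hy hz, mul_comm (mAYR f a y r), ← hci]

theorem div_add_odds_ratio_mul_eq {p p₁ : ℝ} (hp : p ≠ 0) (hp₁ : p₁ ≠ 0) (hp₁' : 1 - p₁ ≠ 0) :
    p₁ / (p₁ + (1 - p) * p₁ / (p * (1 - p₁)) * (1 - p₁)) = p := by
  have hsum : p₁ + (1 - p) * p₁ / (p * (1 - p₁)) * (1 - p₁) = p₁ / p := by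
    field_simp
    ring
  rw [hsum, div_div_cancel₀ hp₁]

theorem propensity_score_of_condIndep_general
    (f : A → Y → Z → Bool → ℝ)
    (hpos : ∀ (a : A) (y : Y) (z : Z) (r : Bool), 0 < f a y z r)
    (hci : CondIndepZR f) (y₁ : Y) :
    ∀ (a : A) (y : Y) (z : Z),
      mAYR f a y true / mAY f a y = f a y z true / mAYZ f a y z ∧
      mAYR f a y true / mAY f a y =
        (mAYR f a y₁ true / mAY f a y₁) /
          ((mAYR f a y₁ true / mAY f a y₁) +
            OddsRatio f y₁ a y * (mAYR f a y₁ false / mAY f a y₁)) := by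
  intro a y z
  have : Nonempty Z := ⟨z⟩
  have hAY : ∀ y, mAY f a y ≠ 0 := fun y => (mAY_pos (hpos a y)).ne'
  have hR : ∀ y r, mAYR f a y r / mAY f a y ≠ 0 := fun y r =>
    (div_pos (mAYR_pos (hpos a y · r)) (mAY_pos (hpos a y))).ne'
  refine ⟨mAYR_div_mAY_eq_of_condIndep hci true (hAY y) (mAYZ_pos (hpos a y z)).ne', ?_⟩
  have hR₁' : 1 - mAYR f a y₁ true / mAY f a y₁ ≠ 0 :=
    mAYR_false_div_mAY f a y₁ (hAY y₁) ▸ hR y₁ false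
  rw [OddsRatio, mAYR_false_div_mAY f a y (hAY y), mAYR_false_div_mAY f a y₁ (hAY y₁),
    div_add_odds_ratio_mul_eq (hR y true) (hR y₁ true) hR₁']

/-- equation (3.7): under the shadow-variable conditional independence
`Z ⟂ R | (Y, A)`, the propensity score satisfies
`f(R=1 | a, y) = f(R=1 | a, y, z)` and
`f(R=1 | a, y) = f(R=1 | a, y₁) / (f(R=1 | a, y₁) + OR(a,y) · f(R=0 | a, y₁))`. -/
theorem propensity_score_of_condIndep
    (f : A → Y → Z → Bool → ℝ)
    (hpos : ∀ (a : A) (y : Y) (z : Z) (r : Bool), 0 < f a y z r)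
    (hsum : ∑ a, ∑ y, ∑ z, ∑ r, f a y z r = 1)
    (hci : CondIndepZR f) (y₁ : Y) :
    ∀ (a : A) (y : Y) (z : Z),
      mAYR f a y true / mAY f a y = f a y z true / mAYZ f a y z ∧
      mAYR f a y true / mAY f a y =
        (mAYR f a y₁ true / mAY f a y₁) /
          ((mAYR f a y₁ true / mAY f a y₁) +
            OddsRatio f y₁ a y * (mAYR f a y₁ false / mAY f a y₁)) :=
  propensity_score_of_condIndep_general f hpos hci y₁
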